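/- Let X₁, X₂ be Banach spaces and suppose there is a linear isometric embedding Φ : L(X₁) → L(X₂) with Φ(Id_{X₁}) = Id_{X₂}. Then n(X₂) ≤ n(X₁). -/

import Mathlib

open Metric Set

/-- The numerical radius of a bounded linear operator `T` on a normed space `X` over `𝕜`:
`v(T) = sup { ‖x*(Tx)‖ : x ∈ S_X, x* ∈ S_{X*}, x*(x) = 1 }`. -/
noncomputable def numRadius (𝕜 : Type*) [RCLike 𝕜] {X : Type*} [NormedAddCommGroup X]
    [NormedSpace 𝕜 X] (T : X →L[𝕜] X) : ℝ :=
  sSup {r : ℝ | ∃ (x : X) (f : X →L[𝕜] 𝕜), ‖x‖ = 1 ∧ ‖f‖ = 1 ∧ f x = 1 ∧ r = ‖f (T x)‖}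

/-- The numerical index of a normed space: `n(X) = inf { v(T) : T ∈ L(X), ‖T‖ = 1 }`. -/
noncomputable def numIndex (𝕜 : Type*) [RCLike 𝕜] (X : Type*) [NormedAddCommGroup X]
    [NormedSpace 𝕜 X] : ℝ :=
  sInf {r : ℝ | ∃ T : X →L[𝕜] X, ‖T‖ = 1 ∧ r = numRadius 𝕜 T}

/-- `v_δ(T)` computed with points taken in `A ⊆ B_X` and functionals in `B ⊆ B_{X*}`. -/
noncomputable def numRadiusDeltaOn (𝕜 : Type*) [RCLike 𝕜] {X : Type*} [NormedAddCommGroup X]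
    [NormedSpace 𝕜 X] (T : X →L[𝕜] X) (A : Set X) (B : Set (X →L[𝕜] 𝕜)) (δ : ℝ) : ℝ :=
  sSup {r : ℝ | ∃ x ∈ A, ∃ f ∈ B, 1 - δ < RCLike.re (f x) ∧ r = ‖f (T x)‖}

/-- `Z` (together with the bounded bilinear map `t`) is the projective tensor product
`X ⊗̂_π Y`: it is complete, elementary tensors have norm `‖x‖‖y‖`, and the closed unit
ball of `Z` is the closed convex hull of `B_X ⊗ B_Y`. -/
structure IsProjectiveTensorProduct (𝕜 : Type*) [RCLike 𝕜] {X Y Z : Type*}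
    [NormedAddCommGroup X] [NormedSpace 𝕜 X] [NormedAddCommGroup Y] [NormedSpace 𝕜 Y]
    [NormedAddCommGroup Z] [NormedSpace 𝕜 Z] [NormedSpace ℝ Z] [IsScalarTower ℝ 𝕜 Z]
    (t : X →L[𝕜] Y →L[𝕜] Z) : Prop where
  complete : CompleteSpace Z
  norm_tmul : ∀ x y, ‖t x y‖ = ‖x‖ * ‖y‖
  ball_eq : closedBall (0 : Z) 1 = closure (convexHull ℝ
      {z : Z | ∃ x ∈ closedBall (0 : X) 1, ∃ y ∈ closedBall (0 : Y) 1, z = t x y})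

/-- `Z` (together with the bounded bilinear map `t`) is the injective tensor product
`X ⊗̂_ε Y`: it is complete, the span of elementary tensors is dense, and on that span
the norm is the injective tensor norm. -/
structure IsInjectiveTensorProduct (𝕜 : Type*) [RCLike 𝕜] {X Y Z : Type*}
    [NormedAddCommGroup X] [NormedSpace 𝕜 X] [NormedAddCommGroup Y] [NormedSpace 𝕜 Y]
    [NormedAddCommGroup Z] [NormedSpace 𝕜 Z] (t : X →L[𝕜] Y →L[𝕜] Z) : Prop where
  complete : CompleteSpace Z
  dense_span : Dense (Submodule.span 𝕜 {z : Z | ∃ x y, z = t x y} : Set Z)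
  norm_sum : ∀ (n : ℕ) (x : Fin n → X) (y : Fin n → Y),
    ‖∑ i, t (x i) (y i)‖ = sSup {r : ℝ | ∃ (f : X →L[𝕜] 𝕜) (g : Y →L[𝕜] 𝕜),
      ‖f‖ ≤ 1 ∧ ‖g‖ ≤ 1 ∧ r = ‖∑ i, f (x i) * g (y i)‖}

/-- A slice of a bounded set `A`: `{a ∈ A : Re f(a) > sup Re f(A) - δ}`. -/
def sliceOf (𝕜 : Type*) [RCLike 𝕜] {X : Type*} [NormedAddCommGroup X] [NormedSpace 𝕜 X]
    (A : Set X) (f : X →L[𝕜] 𝕜) (δ : ℝ) : Set X :=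
  {a ∈ A | sSup {r : ℝ | ∃ b ∈ A, r = RCLike.re (f b)} - δ < RCLike.re (f a)}

/-- A set `A` is slicely countably determined (SCD) if there is a countable determining
family of slices of `A`: any `B ⊆ A` meeting every slice of the family has
closed convex hull containing `A`. -/
def IsSCD (𝕜 : Type*) [RCLike 𝕜] {X : Type*} [NormedAddCommGroup X] [NormedSpace 𝕜 X]
    [NormedSpace ℝ X] [IsScalarTower ℝ 𝕜 X] (A : Set X) : Prop :=
  ∃ V : ℕ → Set X, (∀ n, ∃ (f : X →L[𝕜] 𝕜) (δ : ℝ), 0 < δ ∧ V n = sliceOf 𝕜 A f δ) ∧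
    ∀ B ⊆ A, (∀ n, (B ∩ V n).Nonempty) → A ⊆ closure (convexHull ℝ B)

/-- The Daugavet property: `‖Id + T‖ = 1 + ‖T‖` for every rank-one operator `T`. -/
def DaugavetProperty (𝕜 : Type*) [RCLike 𝕜] (X : Type*) [NormedAddCommGroup X]
    [NormedSpace 𝕜 X] : Prop :=
  ∀ T : X →L[𝕜] X, (∃ (f : X →L[𝕜] 𝕜) (x₀ : X), ∀ x, T x = f x • x₀) →
    ‖ContinuousLinearMap.id 𝕜 X + T‖ = 1 + ‖T‖

/-! For a state `(x, f)` one has `‖1 + αT‖ ≥ 1 + α Re f(Tx)`. Conversely, if `Re V(S) ≤ v`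
then `U = S - v` is dissipative, so `1 - αU` does not decrease norms, and
`(1 - αU)(1 + αU) = 1 - α²U²` gives `‖1 + αS‖ ≤ 1 + αv + O(α²)`. So `sup Re V(S)` is determined
by the norms `‖1 + αS‖` as `α → 0⁺`. A unital isometry `Φ` preserves these norms; after rotating
`T` by a unimodular scalar this yields `v(ΦT) ≤ v(T)`, and `‖ΦT‖ = ‖T‖` gives the claim. -/

open RCLike
open scoped Pointwise

section NumericalRange

variable {𝕜 X : Type*} [RCLike 𝕜] [NormedAddCommGroup X] [NormedSpace 𝕜 X]

/-- The spatial numerical range `V(T)`. -/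
def numRange (𝕜 : Type*) [RCLike 𝕜] {X : Type*} [NormedAddCommGroup X] [NormedSpace 𝕜 X]
    (T : X →L[𝕜] X) : Set 𝕜 :=
  {z | ∃ (x : X) (f : X →L[𝕜] 𝕜), ‖x‖ = 1 ∧ ‖f‖ = 1 ∧ f x = 1 ∧ z = f (T x)}

lemma norm_le_opNorm_of_mem_numRange {T : X →L[𝕜] X} {z : 𝕜} (hz : z ∈ numRange 𝕜 T) :
    ‖z‖ ≤ ‖T‖ := by
  obtain ⟨x, f, hx, hf, -, rfl⟩ := hz
  simpa [hx, hf] using f.le_of_opNorm_le_of_le (le_of_eq hf) (T.le_opNorm x)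

lemma numRadius_nonneg (T : X →L[𝕜] X) : 0 ≤ numRadius 𝕜 T :=
  Real.sSup_nonneg fun _ ⟨_, _, _, _, _, hr⟩ => hr ▸ norm_nonneg _

lemma norm_le_numRadius {T : X →L[𝕜] X} {z : 𝕜} (hz : z ∈ numRange 𝕜 T) :
    ‖z‖ ≤ numRadius 𝕜 T := by
  refine le_csSup ⟨‖T‖, ?_⟩ ?_
  · rintro _ ⟨x, f, hx, hf, hfx, rfl⟩
    exact norm_le_opNorm_of_mem_numRange ⟨x, f, hx, hf, hfx, rfl⟩
  · obtain ⟨x, f, hx, hf, hfx, rfl⟩ := hz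
    exact ⟨x, f, hx, hf, hfx, rfl⟩

lemma numRange_smul (a : 𝕜) (T : X →L[𝕜] X) : numRange 𝕜 (a • T) = a • numRange 𝕜 T := by
  ext z
  simp only [numRange, Set.mem_smul_set, Set.mem_ofPred_eq, smul_apply,
    map_smul, smul_eq_mul]
  constructor
  · rintro ⟨x, f, hx, hf, hfx, rfl⟩
    exact ⟨_, ⟨x, f, hx, hf, hfx, rfl⟩, rfl⟩
  · rintro ⟨_, ⟨x, f, hx, hf, hfx, rfl⟩, rfl⟩
    exact ⟨x, f, hx, hf, hfx, rfl⟩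

lemma one_add_mul_re_le_norm_one_add_smul {T : X →L[𝕜] X} {z : 𝕜} (hz : z ∈ numRange 𝕜 T)
    (α : ℝ) : 1 + α * re z ≤ ‖1 + (α : 𝕜) • T‖ := by
  obtain ⟨x, f, hx, hf, hfx, rfl⟩ := hz
  have hre : re (f ((1 + (α : 𝕜) • T) x)) = 1 + α * re (f (T x)) := by
    simp [hfx]
  calc 1 + α * re (f (T x)) = re (f ((1 + (α : 𝕜) • T) x)) := hre.symm
    _ ≤ ‖f ((1 + (α : 𝕜) • T) x)‖ := re_le_norm _
    _ ≤ ‖1 + (α : 𝕜) • T‖ := by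
      simpa [hx, hf] using f.le_of_opNorm_le_of_le (le_of_eq hf) ((1 + (α : 𝕜) • T).le_opNorm x)

section Dissipative

variable {U : X →L[𝕜] X} (hU : ∀ z ∈ numRange 𝕜 U, re z ≤ 0)
include hU

lemma re_dual_vector_apply_nonpos {x : X} {f : X →L[𝕜] 𝕜} (hf : ‖f‖ = 1)
    (hfx : f x = ‖x‖) : re (f (U x)) ≤ 0 := by
  rcases eq_or_ne x 0 with rfl | hx
  · simp
  have hxn : 0 < ‖x‖ := norm_pos_iff.mpr hx
  have hstate : f (U ((‖x‖⁻¹ : 𝕜) • x)) ∈ numRange 𝕜 U := by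
    refine ⟨_, f, ?_, hf, ?_, rfl⟩
    · simp [norm_smul, hxn.ne']
    · simp [hfx, hxn.ne']
  have := hU _ hstate
  simp only [map_smul, smul_eq_mul, ← ofReal_inv, re_ofReal_mul] at this
  exact nonpos_of_mul_nonpos_right this (inv_pos.mpr hxn)

lemma norm_le_norm_sub_smul_apply {α : ℝ} (hα : 0 ≤ α) (x : X) :
    ‖x‖ ≤ ‖x - (α : 𝕜) • U x‖ := by
  rcases eq_or_ne x 0 with rfl | hx
  · simp
  obtain ⟨f, hf, hfx⟩ := exists_dual_vector 𝕜 x (norm_ne_zero_iff.mpr hx)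
  have hre := re_dual_vector_apply_nonpos hU hf hfx
  calc ‖x‖ ≤ ‖x‖ - α * re (f (U x)) := by nlinarith
    _ = re (f (x - (α : 𝕜) • U x)) := by simp [hfx]
    _ ≤ ‖f‖ * ‖x - (α : 𝕜) • U x‖ := (re_le_norm _).trans (f.le_opNorm _)
    _ = ‖x - (α : 𝕜) • U x‖ := by rw [hf, one_mul]

lemma norm_one_add_smul_le_of_dissipative {α : ℝ} (hα : 0 ≤ α) :
    ‖1 + (α : 𝕜) • U‖ ≤ 1 + α ^ 2 * ‖U‖ ^ 2 := by
  refine ContinuousLinearMap.opNorm_le_bound _ (by positivity) fun x => ?_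
  have hUU : ‖U (U x)‖ ≤ ‖U‖ ^ 2 * ‖x‖ := by
    rw [sq, mul_assoc]
    exact U.le_opNorm_of_le (U.le_opNorm x)
  -- `(1 - αU)(1 + αU) = 1 - α²U²`, and `1 - αU` does not decrease norms
  calc ‖(1 + (α : 𝕜) • U) x‖
      ≤ ‖(1 + (α : 𝕜) • U) x - (α : 𝕜) • U ((1 + (α : 𝕜) • U) x)‖ :=
        norm_le_norm_sub_smul_apply hU hα _
    _ = ‖x - ((α ^ 2 : ℝ) : 𝕜) • U (U x)‖ := by
        congr 1
        simp only [add_apply, one_apply_eq_self, smul_apply, map_add, map_smul, smul_add,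
          smul_smul, ofReal_pow]
        module
    _ ≤ ‖x‖ + α ^ 2 * (‖U‖ ^ 2 * ‖x‖) := by
        refine (norm_sub_le _ _).trans ?_
        rw [norm_smul, norm_ofReal, abs_of_nonneg (by positivity)]
        gcongr
    _ = (1 + α ^ 2 * ‖U‖ ^ 2) * ‖x‖ := by ring

end Dissipative

lemma norm_one_add_smul_le {S : X →L[𝕜] X} {v α : ℝ} (hS : ∀ z ∈ numRange 𝕜 S, re z ≤ v)
    (hv : 0 ≤ v) (hα : 0 ≤ α) :
    ‖1 + (α : 𝕜) • S‖ ≤ 1 + α * v + α ^ 2 * ‖S - (v : 𝕜) • 1‖ ^ 2 := by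
  have hU : ∀ z ∈ numRange 𝕜 (S - (v : 𝕜) • 1), re z ≤ 0 := by
    rintro _ ⟨x, f, hx, hf, hfx, rfl⟩
    simpa [hfx] using hS _ ⟨x, f, hx, hf, hfx, rfl⟩
  have hsplit :
      1 + (α : 𝕜) • S = (1 + (α : 𝕜) • (S - (v : 𝕜) • 1)) + ((α * v : ℝ) : 𝕜) • 1 := by
    rw [ofReal_mul]
    module
  have hid : ‖((α * v : ℝ) : 𝕜) • (1 : X →L[𝕜] X)‖ ≤ α * v := by
    refine (norm_smul_le ((α * v : ℝ) : 𝕜) (1 : X →L[𝕜] X)).trans ?_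
    rw [norm_ofReal, abs_of_nonneg (by positivity)]
    exact mul_le_of_le_one_right (by positivity) ContinuousLinearMap.norm_id_le
  rw [hsplit]
  linarith [norm_add_le (1 + (α : 𝕜) • (S - (v : 𝕜) • 1)) (((α * v : ℝ) : 𝕜) • 1),
    norm_one_add_smul_le_of_dissipative hU hα]

lemma le_of_forall_one_add_mul_le_norm_one_add_smul {S : X →L[𝕜] X} {v c : ℝ}
    (hS : ∀ z ∈ numRange 𝕜 S, re z ≤ v) (hv : 0 ≤ v)
    (hc : ∀ α : ℝ, 0 < α → 1 + α * c ≤ ‖1 + (α : 𝕜) • S‖) : c ≤ v := by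
  set K := ‖S - (v : 𝕜) • 1‖ ^ 2
  have hcα : ∀ α : ℝ, 0 < α → c ≤ v + α * K := fun α hα => by
    have := (hc α hα).trans (norm_one_add_smul_le hS hv hα.le)
    exact le_of_mul_le_mul_left (by nlinarith) hα
  refine le_of_forall_pos_le_add fun ε hε => (hcα _ (by positivity : 0 < ε / (K + 1))).trans ?_
  have : ε / (K + 1) * K ≤ ε := by
    rw [div_mul_eq_mul_div, div_le_iff₀ (by positivity)]
    nlinarith
  linarith

lemma numIndex_le_numRadius {T : X →L[𝕜] X} (hT : ‖T‖ = 1) : numIndex 𝕜 X ≤ numRadius 𝕜 T :=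
  csInf_le ⟨0, by rintro _ ⟨S, -, rfl⟩; exact numRadius_nonneg S⟩ ⟨T, hT, rfl⟩

lemma numIndex_of_subsingleton [Subsingleton X] : numIndex 𝕜 X = 0 := by
  simp [numIndex]

end NumericalRange

lemma numRadius_map_le {𝕜 X₁ X₂ : Type*} [RCLike 𝕜]
    [NormedAddCommGroup X₁] [NormedSpace 𝕜 X₁] [NormedAddCommGroup X₂] [NormedSpace 𝕜 X₂]
    (Φ : (X₁ →L[𝕜] X₁) →ₗᵢ[𝕜] (X₂ →L[𝕜] X₂)) (hΦ : Φ 1 = 1) (T : X₁ →L[𝕜] X₁) :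
    numRadius 𝕜 (Φ T) ≤ numRadius 𝕜 T := by
  refine Real.sSup_le ?_ (numRadius_nonneg T)
  rintro _ ⟨y, g, hy, hg, hgy, rfl⟩
  set c := g (Φ T y)
  set ω : 𝕜 := starRingEnd 𝕜 c / ‖c‖
  have hω : ‖ω‖ ≤ 1 := by
    rw [norm_div, norm_conj, norm_ofReal, abs_norm]
    exact div_self_le_one _
  have hωc : re (ω * c) = ‖c‖ := by
    rw [div_mul_eq_mul_div, RCLike.conj_mul, ← ofReal_pow, ← ofReal_div, ofReal_re, sq,
      mul_self_div_self]
  have hS : ∀ z ∈ numRange 𝕜 (ω • T), re z ≤ numRadius 𝕜 T := by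
    rw [numRange_smul]
    rintro _ ⟨z, hz, rfl⟩
    calc re (ω • z) ≤ ‖ω * z‖ := re_le_norm _
      _ ≤ ‖z‖ := by rw [norm_mul]; exact mul_le_of_le_one_left (norm_nonneg _) hω
      _ ≤ numRadius 𝕜 T := norm_le_numRadius hz
  refine le_of_forall_one_add_mul_le_norm_one_add_smul hS (numRadius_nonneg T) fun α _ => ?_
  have hmem : ω * c ∈ numRange 𝕜 (ω • Φ T) := by
    rw [numRange_smul]
    exact Set.smul_mem_smul_set ⟨y, g, hy, hg, hgy, rfl⟩
  calc 1 + α * ‖c‖ = 1 + α * re (ω * c) := by rw [hωc]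
    _ ≤ ‖1 + (α : 𝕜) • ω • Φ T‖ := one_add_mul_re_le_norm_one_add_smul hmem α
    _ = ‖1 + (α : 𝕜) • ω • T‖ := by rw [← Φ.norm_map, map_add, map_smul, map_smul, hΦ]

theorem numIndex_le_of_unital_isometric_embedding_general {𝕜 X₁ X₂ : Type*} [RCLike 𝕜]
    [NormedAddCommGroup X₁] [NormedSpace 𝕜 X₁]
    [NormedAddCommGroup X₂] [NormedSpace 𝕜 X₂]
    (Φ : (X₁ →L[𝕜] X₁) →ₗᵢ[𝕜] (X₂ →L[𝕜] X₂))
    (hΦ : Φ (ContinuousLinearMap.id 𝕜 X₁) = ContinuousLinearMap.id 𝕜 X₂) :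
    numIndex 𝕜 X₂ ≤ numIndex 𝕜 X₁ := by
  rcases subsingleton_or_nontrivial X₁ with hX₁ | hX₁
  · have : Subsingleton X₂ := not_nontrivial_iff_subsingleton.mp fun _ => by
      simpa using congrArg norm hΦ
    rw [numIndex_of_subsingleton, numIndex_of_subsingleton]
  · refine le_csInf ⟨_, _, ContinuousLinearMap.norm_id, rfl⟩ ?_
    rintro _ ⟨T, hT, rfl⟩
    exact (numIndex_le_numRadius (by rwa [Φ.norm_map])).trans (numRadius_map_le Φ hΦ T)

/-- If there is a linear isometric embedding `L(X₁) → L(X₂)` carrying the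
identity to the identity, then `n(X₂) ≤ n(X₁)`. -/
theorem numIndex_le_of_unital_isometric_embedding {𝕜 X₁ X₂ : Type*} [RCLike 𝕜]
    [NormedAddCommGroup X₁] [NormedSpace 𝕜 X₁] [CompleteSpace X₁]
    [NormedAddCommGroup X₂] [NormedSpace 𝕜 X₂] [CompleteSpace X₂]
    (Φ : (X₁ →L[𝕜] X₁) →ₗᵢ[𝕜] (X₂ →L[𝕜] X₂))
    (hΦ : Φ (ContinuousLinearMap.id 𝕜 X₁) = ContinuousLinearMap.id 𝕜 X₂) :
    numIndex 𝕜 X₂ ≤ numIndex 𝕜 X₁ :=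
  numIndex_le_of_unital_isometric_embedding_general Φ hΦ
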